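/- arXiv:1701.03184 — 2 statements merged into one kernel-verified Lean document; each statement's English description precedes it below -/
import Mathlib

section
/- For every right R_n-module K one has Hom_{R_{n+1}}(F_1 L_n, F_0 K) = 0, and consequently F_1 F_0 K ≅ F_0 F_0 K as right R_{n+2}-modules. -/
universe u

open MulOpposite

/-- A ring homomorphism out of an opposite ring into a commutative ring. -/
def opCompCommHom {A B : Type*} [Ring A] [CommRing B] (f : A →+* B) : Aᵐᵒᵖ →+* B where
  toFun t := f t.unop
  map_one' := by simp
  map_mul' _ _ := by simp [mul_comm]
  map_zero' := by simp
  map_add' _ _ := by simp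

/-- The data of a ring `R` together with a `k`-`R`-bimodule `L`, used to form the
one-point extension `R[L]`. -/
structure OPEData (k : Type u) [Field k] : Type (u + 1) where
  R : Type u
  [ringR : Ring R]
  L : Type u
  [acgL : AddCommGroup L]
  [modkL : Module k L]
  [modRL : Module Rᵐᵒᵖ L]
  [commL : SMulCommClass k Rᵐᵒᵖ L]

attribute [instance] OPEData.ringR OPEData.acgL OPEData.modkL OPEData.modRL OPEData.commL

namespace OPEData

variable {k : Type u} [Field k] (X : OPEData k)

instance leftPairModule : Module (X.R × k) X.L := Module.compHom X.L (RingHom.snd X.R k)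

instance rightPairModule : Module (X.R × k)ᵐᵒᵖ X.L :=
  Module.compHom X.L (RingHom.op (RingHom.fst X.R k))

@[simp] theorem pair_smul (x : X.R × k) (l : X.L) : x • l = x.2 • l := rfl

@[simp] theorem pairop_smul (x : (X.R × k)ᵐᵒᵖ) (l : X.L) : x • l = op x.unop.1 • l := rfl

instance pairSMulComm : SMulCommClass (X.R × k) (X.R × k)ᵐᵒᵖ X.L :=
  ⟨fun a b l => smul_comm a.2 (op b.unop.1) l⟩

/-- The one-point extension `R[L]`, realized as the triangular matrix ring
`[[R, 0], [L, k]]` (a square-zero extension of `R × k` by `L`). -/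
abbrev ring' : Type u := TrivSqZeroExt (X.R × k) X.L

variable (M : Type u) [AddCommGroup M] [Module X.Rᵐᵒᵖ M]

/-- Scalar multiplication by `a : k` on `L`, as an endomorphism of the right
`R`-module `L`. -/
def kScale (a : k) : X.L →ₗ[X.Rᵐᵒᵖ] X.L where
  toFun l := a • l
  map_add' x y := smul_add a x y
  map_smul' r l := smul_comm a r l

@[simp] theorem kScale_apply (a : k) (l : X.L) : X.kScale a l = a • l := rfl

/-- The right `R[L]`-module structure on `F₁ M = (Hom_R(L, M), M, id)`, namely on
`Hom_R(L,M) × M`. -/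
instance F1Module : Module (X.ring')ᵐᵒᵖ ((X.L →ₗ[X.Rᵐᵒᵖ] M) × M) where
  smul t p := (p.1 ∘ₗ X.kScale t.unop.fst.2, op t.unop.fst.1 • p.2 + p.1 t.unop.snd)
  one_smul p := by
    refine Prod.ext (LinearMap.ext fun z => ?_) ?_
    · show p.1 ((1 : k) • z) = p.1 z
      rw [one_smul]
    · show op ((1 : X.R × k).1) • p.2 + p.1 (0 : X.L) = p.2
      simp
  mul_smul x y p := by
    refine Prod.ext (LinearMap.ext fun z => ?_) ?_
    · show p.1 ((x * y).unop.fst.2 • z) = p.1 (y.unop.fst.2 • x.unop.fst.2 • z)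
      rw [unop_mul, TrivSqZeroExt.fst_mul, ← mul_smul]
      rfl
    · show op ((x * y).unop.fst.1) • p.2 + p.1 ((x * y).unop.snd)
        = op x.unop.fst.1 • (op y.unop.fst.1 • p.2 + p.1 y.unop.snd)
          + (p.1 ∘ₗ X.kScale y.unop.fst.2) x.unop.snd
      rw [unop_mul, TrivSqZeroExt.fst_mul, TrivSqZeroExt.snd_mul]
      simp only [pair_smul, pairop_smul, Prod.fst_mul, smul_add, map_add, map_smul,
        LinearMap.comp_apply, op_mul, mul_smul, unop_op, kScale_apply]
      abel
  smul_zero t := by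
    refine Prod.ext (LinearMap.ext fun z => ?_) ?_
    · show (0 : X.L →ₗ[X.Rᵐᵒᵖ] M) (X.kScale t.unop.fst.2 z) = 0
      simp
    · show op t.unop.fst.1 • (0 : M) + (0 : X.L →ₗ[X.Rᵐᵒᵖ] M) t.unop.snd = 0
      simp
  smul_add t p q := by
    refine Prod.ext (LinearMap.ext fun z => ?_) ?_
    · show (p.1 + q.1) (X.kScale t.unop.fst.2 z)
        = p.1 (X.kScale t.unop.fst.2 z) + q.1 (X.kScale t.unop.fst.2 z)
      simp
    · show op t.unop.fst.1 • (p.2 + q.2) + (p.1 + q.1) t.unop.snd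
        = (op t.unop.fst.1 • p.2 + p.1 t.unop.snd)
          + (op t.unop.fst.1 • q.2 + q.1 t.unop.snd)
      simp only [LinearMap.add_apply, smul_add]
      abel
  add_smul s t p := by
    refine Prod.ext (LinearMap.ext fun z => ?_) ?_
    · show p.1 ((s + t).unop.fst.2 • z)
        = p.1 (s.unop.fst.2 • z) + p.1 (t.unop.fst.2 • z)
      rw [unop_add, TrivSqZeroExt.fst_add, ← map_add, ← add_smul]
      rfl
    · show op ((s + t).unop.fst.1) • p.2 + p.1 ((s + t).unop.snd)
        = (op s.unop.fst.1 • p.2 + p.1 s.unop.snd)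
          + (op t.unop.fst.1 • p.2 + p.1 t.unop.snd)
      rw [unop_add, TrivSqZeroExt.fst_add, TrivSqZeroExt.snd_add]
      show op (s.unop.fst.1 + t.unop.fst.1) • p.2 + _ = _
      rw [op_add, add_smul, map_add]
      try abel
  zero_smul p := by
    refine Prod.ext (LinearMap.ext fun z => ?_) ?_
    · show p.1 ((0 : k) • z) = 0
      rw [zero_smul, map_zero]
    · show op ((0 : X.R × k).1) • p.2 + p.1 (0 : X.L) = 0
      simp

instance homSMulCommClass : SMulCommClass X.Rᵐᵒᵖ k X.L :=
  SMulCommClass.symm k X.Rᵐᵒᵖ X.L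

instance stepSMulCommClass :
    SMulCommClass k (X.ring')ᵐᵒᵖ ((X.L →ₗ[X.Rᵐᵒᵖ] X.L) × X.L) where
  smul_comm a t p := by
    refine Prod.ext (LinearMap.ext fun z => ?_) ?_
    · rfl
    · show a • (op t.unop.fst.1 • p.2 + p.1 t.unop.snd)
        = op t.unop.fst.1 • (a • p.2) + (a • p.1) t.unop.snd
      rw [smul_add, smul_comm]
      rfl

/-- The one-point extension step: `R[L]` together with the bimodule `L' = F₁ L`. -/
def step : OPEData k where
  R := X.ring'
  L := (X.L →ₗ[X.Rᵐᵒᵖ] X.L) × X.L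
  ringR := inferInstance
  acgL := inferInstance
  modkL := inferInstance
  modRL := X.F1Module X.L
  commL := inferInstance

/-- A bundled right module over the ring of `X`. -/
structure RMod (X : OPEData k) : Type (u + 1) where
  carrier : Type u
  [acg : AddCommGroup carrier]
  [mod : Module X.Rᵐᵒᵖ carrier]

attribute [instance] RMod.acg RMod.mod

/-- Isomorphism of bundled right modules. -/
def RIso {X : OPEData k} (M N : RMod X) : Prop :=
  Nonempty (M.carrier ≃ₗ[X.Rᵐᵒᵖ] N.carrier)

/-- A bundled module is finitely presented. -/
def RMod.FP {X : OPEData k} (M : RMod X) : Prop :=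
  Module.FinitePresentation X.Rᵐᵒᵖ M.carrier

/-- The first-component projection of the triangular ring `R[L]`, as a ring
homomorphism to `R × k`. -/
def fstRingHom : X.ring' →+* X.R × k where
  toFun t := t.fst
  map_one' := rfl
  map_mul' a b := TrivSqZeroExt.fst_mul a b
  map_zero' := rfl
  map_add' _ _ := rfl

/-- The ring homomorphism `(R[L])ᵐᵒᵖ → Rᵐᵒᵖ` used to define `F₀`. -/
def fstOpHom : (X.ring')ᵐᵒᵖ →+* X.Rᵐᵒᵖ :=
  (RingHom.op (RingHom.fst X.R k)).comp (RingHom.op X.fstRingHom)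

/-- The functor `F₀ : Mod-R → Mod-R[L]`, `M ↦ (0, M, 0)`, on objects. -/
def F0 (M : RMod X) : RMod X.step where
  carrier := M.carrier
  acg := M.acg
  mod := Module.compHom M.carrier X.fstOpHom

/-- The functor `F₁ : Mod-R → Mod-R[L]`, `M ↦ (Hom_R(L,M), M, id)`, on objects. -/
def F1 (M : RMod X) : RMod X.step where
  carrier := (X.L →ₗ[X.Rᵐᵒᵖ] M.carrier) × M.carrier
  acg := inferInstance
  mod := X.F1Module M.carrier

/-- `L` as a bundled right `R`-module. -/
def LBdl : RMod X where
  carrier := X.L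
  acg := inferInstance
  mod := inferInstance

/-- The module `T = (k, 0, 0)` over `R[L]`. -/
def TStep : RMod X.step where
  carrier := k
  acg := inferInstance
  mod := Module.compHom k
    (opCompCommHom ((RingHom.snd X.R k).comp X.fstRingHom))

end OPEData

section Tower

open OPEData

variable (V : Type u) [CommRing V] [IsDomain V] [IsDiscreteValuationRing V]

open IsLocalRing

/-- The right `V`-module structure on the residue field `V/𝔪`. -/
noncomputable instance residueOpModule : Module Vᵐᵒᵖ (ResidueField V) :=
  Module.compHom (ResidueField V) (opCompCommHom (residue V))

instance residueOpSMulComm :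
    SMulCommClass (ResidueField V) Vᵐᵒᵖ (ResidueField V) :=
  ⟨fun a b l => by
    show a * ((residue V b.unop) * l) = (residue V b.unop) * (a * l)
    rw [mul_left_comm]⟩

/-- The base datum: the ring `V` with the `k`-`V`-bimodule `k = V/𝔪`. -/
noncomputable def baseData : OPEData (ResidueField V) where
  R := V
  L := ResidueField V
  ringR := inferInstance
  acgL := inferInstance
  modkL := inferInstance
  modRL := inferInstance
  commL := inferInstance

/-- The tower of iterated one-point extensions `R_0 = V`, `R_{n+1} = R_n[L_n]`. -/
noncomputable def TowerData : ℕ → OPEData (ResidueField V)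
  | 0 => baseData V
  | n + 1 => (TowerData n).step

/-- The module `V/𝔪` viewed as a right `V`-module (this is `T_0`). -/
noncomputable def TZero : RMod (TowerData V 0) where
  carrier := ResidueField V
  acg := inferInstance
  mod := residueOpModule V

/-- The modules `T_n = (k, 0, 0) ∈ Mod-R_n`. -/
noncomputable def TMod : (n : ℕ) → RMod (TowerData V n)
  | 0 => TZero V
  | n + 1 => (TowerData V n).TStep

/-- Iterated application of `F₀`. -/
noncomputable def F0pow : (m : ℕ) → {n : ℕ} → RMod (TowerData V n) → RMod (TowerData V (n + m))
  | 0, _, M => M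
  | m + 1, _, M => (TowerData V _).F0 (F0pow m M)

/-- Iterated application of `F₁`. -/
noncomputable def F1pow : (m : ℕ) → {n : ℕ} → RMod (TowerData V n) → RMod (TowerData V (n + m))
  | 0, _, M => M
  | m + 1, _, M => (TowerData V _).F1 (F1pow m M)

/-- `V` as a right module over itself. -/
noncomputable def VMod : RMod (TowerData V 0) where
  carrier := V
  acg := inferInstance
  mod := inferInstanceAs (Module Vᵐᵒᵖ V)

end Tower

/-!
Both the idempotent `e = (0, 1)` of `R × k` and the radical `L` of `R[L]` act as zero on every
`F₀ K = (0, K, 0)`. On the other hand `F₁ L` is generated by `e • F₁ L = Hom_R(L, L) × 0` together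
with `L • (id, 0) = 0 × L`, so every map `F₁ L → F₀ K` vanishes. Since `F₁ L` is the bimodule of the
next extension, `F₁ N = (Hom(F₁ L, N), N, id)` collapses to `(0, N, 0) = F₀ N` for `N = F₀ K`.
-/

namespace OPEData

variable {k : Type u} [Field k] (X : OPEData k)

section F1Action

variable {M : Type u} [AddCommGroup M] [Module X.Rᵐᵒᵖ M]

@[simp] theorem F1Module_smul_fst (t : (X.ring')ᵐᵒᵖ) (p : (X.L →ₗ[X.Rᵐᵒᵖ] M) × M) :
    (t • p).1 = p.1 ∘ₗ X.kScale t.unop.fst.2 := rfl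

@[simp] theorem F1Module_smul_snd (t : (X.ring')ᵐᵒᵖ) (p : (X.L →ₗ[X.Rᵐᵒᵖ] M) × M) :
    (t • p).2 = op t.unop.fst.1 • p.2 + p.1 t.unop.snd := rfl

theorem op_inl_zero_one_smul (p : (X.L →ₗ[X.Rᵐᵒᵖ] M) × M) :
    op (TrivSqZeroExt.inl ((0 : X.R), (1 : k)) : X.ring') • p = (p.1, 0) := by
  ext <;> simp

theorem op_inr_smul_id_zero (l : X.L) :
    op (TrivSqZeroExt.inr l : X.ring') • ((LinearMap.id : X.L →ₗ[X.Rᵐᵒᵖ] X.L), (0 : X.L))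
      = (0, l) := by
  ext <;> simp

end F1Action

theorem fstOpHom_op_inl_zero (a : k) :
    X.fstOpHom (op (TrivSqZeroExt.inl ((0 : X.R), a) : X.ring')) = 0 := rfl

theorem fstOpHom_op_inr (l : X.L) : X.fstOpHom (op (TrivSqZeroExt.inr l : X.ring')) = 0 := rfl

theorem F0_smul_eq_zero_of_fstOpHom_eq_zero {M : RMod X} {t : (X.step.R)ᵐᵒᵖ}
    (ht : X.fstOpHom t = 0) (y : (X.F0 M).carrier) : t • y = 0 :=
  letI y' : M.carrier := y
  (congrArg (· • y') ht).trans (zero_smul _ y')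

theorem hom_F1_LBdl_F0_eq_zero (K : RMod X)
    (f : (X.F1 X.LBdl).carrier →ₗ[(X.step.R)ᵐᵒᵖ] (X.F0 K).carrier) : f = 0 := by
  have hf : ∀ (t : (X.ring')ᵐᵒᵖ) (p : (X.L →ₗ[X.Rᵐᵒᵖ] X.L) × X.L),
      X.fstOpHom t = 0 → f (t • p) = 0 := fun t p ht =>
    (f.map_smul t p).trans (F0_smul_eq_zero_of_fstOpHom_eq_zero X ht _)
  ext ⟨φ, l⟩
  have hhom : f (φ, 0) = 0 :=
    (congrArg f (X.op_inl_zero_one_smul (φ, l))).symm.trans (hf _ _ (X.fstOpHom_op_inl_zero 1))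
  have hsnd : f (0, l) = 0 :=
    (congrArg f (X.op_inr_smul_id_zero l)).symm.trans (hf _ _ (X.fstOpHom_op_inr l))
  calc f (φ, l) = f ((φ, 0) + (0, l)) := congrArg f (Prod.ext (add_zero φ).symm (zero_add l).symm)
    _ = f (φ, 0) + f (0, l) := f.map_add _ _
    _ = 0 := by rw [hhom, hsnd, add_zero]

def F1EquivF0OfHomEqZero (N : RMod X) (h : ∀ φ : X.L →ₗ[X.Rᵐᵒᵖ] N.carrier, φ = 0) :
    (X.F1 N).carrier ≃ₗ[(X.step.R)ᵐᵒᵖ] (X.F0 N).carrier where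
  toFun p := p.2
  invFun y := (0, y)
  map_add' _ _ := rfl
  map_smul' t p := by
    change op t.unop.fst.1 • p.2 + p.1 t.unop.snd = _
    rw [h p.1, LinearMap.zero_apply, add_zero]
    rfl
  left_inv p := Prod.ext (h p.1).symm rfl
  right_inv _ := rfl

end OPEData

open OPEData in
/-- For every right `R_n`-module `K` one has `Hom_{R_{n+1}}(F₁ L_n, F₀ K) = 0`, and
consequently `F₁ F₀ K ≅ F₀ F₀ K` as right `R_{n+2}`-modules. -/
theorem hom_F1L_F0_eq_zero_and_F1F0_iso_F0F0
    (V : Type u) [CommRing V] [IsDomain V] [IsDiscreteValuationRing V] (n : ℕ)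
    (K : RMod (TowerData V n)) :
    (∀ f : ((TowerData V n).F1 ((TowerData V n).LBdl)).carrier
        →ₗ[((TowerData V n).step.R)ᵐᵒᵖ] ((TowerData V n).F0 K).carrier, f = 0) ∧
      RIso ((TowerData V n).step.F1 ((TowerData V n).F0 K))
        ((TowerData V n).step.F0 ((TowerData V n).F0 K)) := by
  have hom_eq_zero := (TowerData V n).hom_F1_LBdl_F0_eq_zero K
  exact ⟨hom_eq_zero, ⟨(TowerData V n).step.F1EquivF0OfHomEqZero _ hom_eq_zero⟩⟩
end

section
/- Let R be an artin algebra, let i : A → B_1 be an embedding and μ : B_2 → C a short embedding (of length n) between finitely presented R-modules, and suppose that 0 → A → B_1 ⊕ B_2 → C → 0, with left map (i, π)^T and right map (γ, μ), is an almost split exact sequence. Then i is a short embedding (of length ≤ n + 1). -/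
universe u v

/-- A pp-`n`-formula over the ring `R`: `∃ y₁ … y_{nex}` such that the `neq` homogeneous
linear equations encoded by the matrix `H` hold of `(x, y)`. -/
structure PPFormula (R : Type u) [Ring R] (n : ℕ) : Type u where
  nex : ℕ
  neq : ℕ
  H : Matrix (Fin n ⊕ Fin nex) (Fin neq) R

namespace PPFormula

variable {R : Type u} [Ring R] {n : ℕ}

/-- The solution set of a pp-formula in a module. -/
def Holds (φ : PPFormula R n) (M : Type v) [AddCommGroup M] [Module R M]
    (x : Fin n → M) : Prop :=
  ∃ y : Fin φ.nex → M, ∀ j : Fin φ.neq,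
    (∑ i, φ.H (Sum.inl i) j • x i) + (∑ l, φ.H (Sum.inr l) j • y l) = 0

/-- The pp-definable subgroup `φ(M)` attached to a pp-1-formula. -/
def sub (φ : PPFormula R 1) (M : Type v) [AddCommGroup M] [Module R M] :
    AddSubgroup M where
  carrier := {m : M | φ.Holds M (fun _ => m)}
  zero_mem' := ⟨0, fun j => by simp⟩
  add_mem' := by
    rintro a b ⟨y, hy⟩ ⟨z, hz⟩
    refine ⟨y + z, fun j => ?_⟩
    have h := congrArg₂ (· + ·) (hy j) (hz j)
    simp only [Pi.add_apply, smul_add, Finset.sum_add_distrib] at *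
    rw [add_zero] at h
    rw [← h]; abel
  neg_mem' := by
    rintro a ⟨y, hy⟩
    refine ⟨-y, fun j => ?_⟩
    have h := congrArg (fun t => -t) (hy j)
    simp only [Pi.neg_apply, smul_neg, Finset.sum_neg_distrib, neg_add_rev, neg_zero] at *
    rw [← h]; abel

/-- Implication ordering on pp-formulas: `φ ≤ ψ` iff in every module every solution of `φ`
is a solution of `ψ`. -/
def Le (φ ψ : PPFormula R n) : Prop :=
  ∀ (M : Type u) [AddCommGroup M] [Module R M] (x : Fin n → M), φ.Holds M x → ψ.Holds M x

/-- `φ` generates the pp-type of `a` in `M`. -/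
def Generates (φ : PPFormula R 1) (M : Type u) [AddCommGroup M] [Module R M]
    (a : M) : Prop :=
  a ∈ φ.sub M ∧ ∀ ψ : PPFormula R 1, a ∈ ψ.sub M → φ.Le ψ

/-- The interval `[ψ, φ]` in the lattice of pp-1-formulas has length at most `N`:
there is no strictly ascending chain of length `> N` between `ψ` and `φ`. -/
def IntervalLengthLE (ψ φ : PPFormula R 1) (N : ℕ) : Prop :=
  ∀ (m : ℕ) (c : Fin (m + 1) → PPFormula R 1),
    (∀ i, ψ.Le (c i) ∧ (c i).Le φ) →
    (∀ i : Fin m, (c i.castSucc).Le (c i.succ) ∧ ¬ (c i.succ).Le (c i.castSucc)) →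
    m ≤ N

end PPFormula

section Defs

variable (R : Type u) [Ring R]

/-- An embedding of modules is short of length `N` if for every element `a` of the source,
any generator of the pp-type of `a` and any generator of the pp-type of its image bound an
interval of length at most `N` in the lattice of pp-formulas. -/
def IsShortOfLength {M N : Type u} [AddCommGroup M] [Module R M] [AddCommGroup N]
    [Module R N] (f : M →ₗ[R] N) (B : ℕ) : Prop :=
  Function.Injective f ∧
    ∀ (a : M) (φ ψ : PPFormula R 1), φ.Generates M a → ψ.Generates N (f a) →
      PPFormula.IntervalLengthLE ψ φ B

/-- A short embedding of modules. -/
def IsShortEmbedding {M N : Type u} [AddCommGroup M] [Module R M] [AddCommGroup N]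
    [Module R N] (f : M →ₗ[R] N) : Prop :=
  ∃ B : ℕ, IsShortOfLength R f B

/-- A pure embedding: an injective linear map reflecting all pp-formulas. -/
def IsPureEmbedding {M N : Type u} [AddCommGroup M] [Module R M] [AddCommGroup N]
    [Module R N] (f : M →ₗ[R] N) : Prop :=
  Function.Injective f ∧
    ∀ (n : ℕ) (φ : PPFormula R n) (x : Fin n → M), φ.Holds N (f ∘ x) → φ.Holds M x

/-- A module is pure-injective if it is injective over all pure embeddings. -/
def IsPureInjective (M : Type u) [AddCommGroup M] [Module R M] : Prop :=
  ∀ (A B : Type u) [AddCommGroup A] [Module R A] [AddCommGroup B] [Module R B]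
    (f : A →ₗ[R] B), IsPureEmbedding R f →
      ∀ g : A →ₗ[R] M, ∃ h : B →ₗ[R] M, h.comp f = g

/-- A module is Σ-pure-injective iff it has no infinite properly descending chain of
pp-definable subgroups, i.e. every descending chain stabilizes. -/
def IsSigmaPureInjective (M : Type u) [AddCommGroup M] [Module R M] : Prop :=
  ∀ c : ℕ → PPFormula R 1, (∀ i, ((c (i + 1)).sub M : AddSubgroup M) ≤ (c i).sub M) →
    ∃ N : ℕ, ∀ i, N ≤ i → ((c i).sub M : AddSubgroup M) = (c N).sub M

/-- The ascending chain condition on pp-definable subgroups. -/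
def HasACCppSubgroups (M : Type u) [AddCommGroup M] [Module R M] : Prop :=
  ∀ c : ℕ → PPFormula R 1, (∀ i, ((c i).sub M : AddSubgroup M) ≤ (c (i + 1)).sub M) →
    ∃ N : ℕ, ∀ i, N ≤ i → ((c i).sub M : AddSubgroup M) = (c N).sub M

/-- The lattice of pp-definable subgroups of `M` has finite length. -/
def HasFiniteLengthPPLattice (M : Type u) [AddCommGroup M] [Module R M] : Prop :=
  ∃ B : ℕ, ∀ (m : ℕ) (c : Fin (m + 1) → PPFormula R 1),
    (∀ i : Fin m, ((c i.castSucc).sub M : AddSubgroup M) < (c i.succ).sub M) → m ≤ B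

/-- A module is indecomposable: non-zero, and `0`, `id` are its only idempotent
endomorphisms. -/
def IsIndecomposableModule (M : Type v) [AddCommGroup M] [Module R M] : Prop :=
  (∃ x : M, x ≠ 0) ∧ ∀ e : M →ₗ[R] M, e ∘ₗ e = e → e = 0 ∨ e = LinearMap.id

/-- A bundled module over `R`. -/
structure ModuleBdl (R : Type u) [Ring R] : Type (u + 1) where
  carrier : Type u
  [acg : AddCommGroup carrier]
  [mod : Module R carrier]

attribute [instance] ModuleBdl.acg ModuleBdl.mod

/-- `N` belongs to the Ziegler closure of the set `S` of modules: `N` is an indecomposable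
pure-injective module such that every basic Ziegler-open neighbourhood `(φ/ψ)` of `N` meets
`S`. -/
def MemZieglerClosure (S : Set (ModuleBdl R)) (N : ModuleBdl R) : Prop :=
  IsIndecomposableModule R N.carrier ∧ IsPureInjective R N.carrier ∧
    ∀ φ ψ : PPFormula R 1, ψ.Le φ →
      (ψ.sub N.carrier : AddSubgroup N.carrier) ≠ φ.sub N.carrier →
      ∃ M ∈ S, (ψ.sub M.carrier : AddSubgroup M.carrier) ≠ φ.sub M.carrier

/-- A generic module: indecomposable with pp-lattice of finite length. -/
def IsGenericModule (M : Type u) [AddCommGroup M] [Module R M] : Prop :=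
  IsIndecomposableModule R M ∧ HasFiniteLengthPPLattice R M

end Defs

/-- A short exact sequence `0 → A →f B →g C → 0` of modules is almost split if it does not
split, `A` and `C` are indecomposable, every non-split epimorphism `X → C` factors through
`g`, and every non-split monomorphism `A → X` factors through `f`. -/
def IsAlmostSplitSequence (R : Type u) [Ring R] {A B C : Type u}
    [AddCommGroup A] [Module R A] [AddCommGroup B] [Module R B]
    [AddCommGroup C] [Module R C] (f : A →ₗ[R] B) (g : B →ₗ[R] C) : Prop :=
  Function.Injective f ∧ Function.Surjective g ∧ LinearMap.ker g = LinearMap.range f ∧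
    (¬ ∃ s : C →ₗ[R] B, g ∘ₗ s = LinearMap.id) ∧
    IsIndecomposableModule R A ∧ IsIndecomposableModule R C ∧
    (∀ (X : Type u) [AddCommGroup X] [Module R X] (h : X →ₗ[R] C),
      Function.Surjective h → (¬ ∃ s : C →ₗ[R] X, h ∘ₗ s = LinearMap.id) →
        ∃ t : X →ₗ[R] B, g ∘ₗ t = h) ∧
    (∀ (X : Type u) [AddCommGroup X] [Module R X] (h : A →ₗ[R] X),
      Function.Injective h → (¬ ∃ r : X →ₗ[R] A, r ∘ₗ h = LinearMap.id) →
        ∃ t : B →ₗ[R] X, t ∘ₗ f = h)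

/-!
Fix `a ∈ A`, generators `φ` and `ψ` of the pp-types of `a` in `A` and of `i a` in `B₁`, and a
strictly increasing chain `c₀ < ⋯ < cₘ` in `[ψ, φ]`; let `θ` and `χ` generate the pp-types of
`π a` in `B₂` and of `μ (π a)` in `C`. Since `μ (π a) = -γ (i a)` satisfies `ψ`, the meets
`cₜ ∧ θ` lie in `[χ, θ]`, so they increase strictly at most `n` times. By modularity, at every
step where the meets do not increase, the joins `cₜ + θ` do. The joins lie in `[ψ + θ, φ]`, and
`ψ + θ` holds of `(i a, π a)`. As `(i, π)` is left almost split, a formula in this interval that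
does not hold of `a` generates the pp-type of `(i a, π a)` and so lies below `ψ + θ`. Each join
is therefore equivalent to `φ` or to `ψ + θ`, and the joins increase strictly at most once.
Hence `m ≤ n + 1`.
-/

open Finset

section Jumps

variable {α : Type*} [Preorder α] {m : ℕ}

open scoped Classical in
noncomputable def jumps (c : Fin (m + 1) → α) : Finset (Fin m) :=
  {t | c t.castSucc < c t.succ}

theorem mem_jumps {c : Fin (m + 1) → α} {t : Fin m} :
    t ∈ jumps c ↔ c t.castSucc < c t.succ := by
  simp [jumps]

theorem card_jumps_le_of_chain_bound {a b : α} {n : ℕ}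
    (hlen : ∀ (k : ℕ) (c : Fin (k + 1) → α), (∀ i, a ≤ c i ∧ c i ≤ b) →
      (∀ i : Fin k, c i.castSucc < c i.succ) → k ≤ n)
    {d : Fin (m + 1) → α} (hd : Monotone d) (hab : ∀ i, a ≤ d i ∧ d i ≤ b) :
    #(jumps d) ≤ n := by
  obtain ⟨k, hk⟩ : ∃ k, #(jumps d) = k := ⟨_, rfl⟩
  rcases k with _ | k
  · exact hk.trans_le (Nat.zero_le n)
  let e := (jumps d).orderIsoOfFin hk
  rw [hk]
  -- `d 0` followed by the values just after the jumps is a strictly increasing chain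
  refine hlen _ (Fin.cons (d 0) fun j => d (e j : Fin m).succ)
    (Fin.cases (hab 0) fun j => hab _) fun j => ?_
  refine lt_of_le_of_lt ?_ (by simpa using mem_jumps.1 (e j).2)
  cases j using Fin.cases with
  | zero => exact hd (Fin.zero_le _)
  | succ j =>
    rw [← Fin.succ_castSucc, Fin.cons_succ]
    exact hd (Fin.succ_le_castSucc_iff.2 (e.strictMono Fin.castSucc_lt_succ))

theorem card_jumps_le_one {a b : α} {g : Fin (m + 1) → α} (hg : Monotone g)
    (hab : ∀ i, a ≤ g i ∧ g i ≤ b) (htwo : ∀ i, b ≤ g i ∨ g i ≤ a) :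
    #(jumps g) ≤ 1 := by
  have key : ∀ s ∈ jumps g, ∀ t ∈ jumps g, ¬ s < t := by
    intro s hs t ht hst
    rcases htwo s.succ with h | h
    · exact (mem_jumps.1 ht).not_ge
        ((hab t.succ).2.trans (h.trans (hg (Fin.succ_le_castSucc_iff.2 hst))))
    · exact (mem_jumps.1 hs).not_ge (h.trans (hab s.castSucc).1)
  exact card_le_one.2 fun s hs t ht =>
    le_antisymm (not_lt.1 (key t ht s hs)) (not_lt.1 (key s hs t ht))

end Jumps

theorem injective_mkQ_comp_inl_span_singleton {R A N : Type*} [Ring R] [AddCommGroup A]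
    [Module R A] [AddCommGroup N] [Module R N] {a : A} {t : N}
    (hann : ∀ r : R, r • t = 0 → r • a = 0) :
    Function.Injective ((Submodule.span R {(a, -t)}).mkQ ∘ₗ LinearMap.inl R A N) := by
  rw [← LinearMap.ker_eq_bot, LinearMap.ker_eq_bot']
  intro x hx
  obtain ⟨r, hr⟩ := Submodule.mem_span_singleton.1 ((Submodule.Quotient.mk_eq_zero _).1 hx)
  have hx : r • a = x := congrArg Prod.fst hr
  rw [← hx]
  exact hann r (by simpa using congrArg Prod.snd hr)

def IsLeftAlmostSplit (R : Type u) [Ring R] {A B : Type u} [AddCommGroup A] [Module R A]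
    [AddCommGroup B] [Module R B] (f : A →ₗ[R] B) : Prop :=
  ∀ (X : Type u) [AddCommGroup X] [Module R X] (h : A →ₗ[R] X),
    Function.Injective h → (¬ ∃ r : X →ₗ[R] A, r ∘ₗ h = LinearMap.id) →
      ∃ t : B →ₗ[R] X, t ∘ₗ f = h

namespace PPFormula

variable {R : Type u} [Ring R]

instance {n : ℕ} : Preorder (PPFormula R n) where
  le := Le
  le_refl _ _ _ _ _ h := h
  le_trans _ _ _ h₁ h₂ M _ _ x hx := h₂ M x (h₁ M x hx)

theorem holds_iff_mem_sub {φ : PPFormula R 1} {M : Type*} [AddCommGroup M] [Module R M]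
    {x : Fin 1 → M} : φ.Holds M x ↔ x 0 ∈ φ.sub M := by
  rw [show x = fun _ => x 0 from funext fun i => congrArg x (Subsingleton.elim i 0)]
  rfl

theorem sub_mono {φ ψ : PPFormula R 1} (h : φ ≤ ψ) (M : Type u) [AddCommGroup M]
    [Module R M] : φ.sub M ≤ ψ.sub M :=
  fun _ ha => h M _ ha

theorem le_iff_sub_le {φ ψ : PPFormula R 1} :
    φ ≤ ψ ↔ ∀ (M : Type u) [AddCommGroup M] [Module R M], φ.sub M ≤ ψ.sub M :=
  ⟨sub_mono, fun h M _ _ _ hx => holds_iff_mem_sub.2 (h M (holds_iff_mem_sub.1 hx))⟩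

theorem Holds.map {n : ℕ} {φ : PPFormula R n} {M N : Type*} [AddCommGroup M] [Module R M]
    [AddCommGroup N] [Module R N] (f : M →ₗ[R] N) {x : Fin n → M} (h : φ.Holds M x) :
    φ.Holds N (f ∘ x) := by
  obtain ⟨y, hy⟩ := h
  exact ⟨f ∘ y, fun j => by simpa using congrArg f (hy j)⟩

theorem map_mem_sub {φ : PPFormula R 1} {M N : Type*} [AddCommGroup M] [Module R M]
    [AddCommGroup N] [Module R N] (f : M →ₗ[R] N) {a : M} (h : a ∈ φ.sub M) :
    f a ∈ φ.sub N :=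
  h.map f

/-- The pp-formula `∃ y : Y → M, ∀ e : E, H (inl 0) e • x + ∑ l, H (inr l) e • y l = 0`,
with existential variables and equations indexed by arbitrary finite types. -/
noncomputable def ofTypes (Y E : Type*) [Fintype Y] [Fintype E] (H : Fin 1 ⊕ Y → E → R) :
    PPFormula R 1 where
  nex := Fintype.card Y
  neq := Fintype.card E
  H v j := H (Sum.map id (Fintype.equivFin Y).symm v) ((Fintype.equivFin E).symm j)

theorem mem_sub_ofTypes {Y E : Type*} [Fintype Y] [Fintype E] {H : Fin 1 ⊕ Y → E → R}
    {M : Type*} [AddCommGroup M] [Module R M] {a : M} :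
    a ∈ (ofTypes Y E H).sub M ↔
      ∃ y : Y → M, ∀ e, H (Sum.inl 0) e • a + ∑ l, H (Sum.inr l) e • y l = 0 := by
  change (∃ y : Fin _ → M, ∀ j, _) ↔ _
  simp only [ofTypes, Fin.sum_univ_one, Sum.map_inl, Sum.map_inr, id]
  constructor
  · rintro ⟨y, hy⟩
    refine ⟨y ∘ (Fintype.equivFin Y), fun e => ?_⟩
    have h := hy (Fintype.equivFin E e)
    simp only [Equiv.symm_apply_apply] at h
    rw [← h, ← (Fintype.equivFin Y).symm.sum_comp]
    simp only [Function.comp_apply, Equiv.apply_symm_apply]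
    rfl
  · rintro ⟨y, hy⟩
    refine ⟨y ∘ (Fintype.equivFin Y).symm, fun j => ?_⟩
    rw [← hy ((Fintype.equivFin E).symm j), ← (Fintype.equivFin Y).symm.sum_comp]
    rfl

theorem mem_sub_iff {φ : PPFormula R 1} {M : Type*} [AddCommGroup M] [Module R M] {a : M} :
    a ∈ φ.sub M ↔
      ∃ y : Fin φ.nex → M, ∀ j, φ.H (Sum.inl 0) j • a + ∑ l, φ.H (Sum.inr l) j • y l = 0 := by
  change (∃ y, ∀ j, _) ↔ _
  simp only [Fin.sum_univ_one]

noncomputable def conj (φ ψ : PPFormula R 1) : PPFormula R 1 :=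
  ofTypes (Fin φ.nex ⊕ Fin ψ.nex) (Fin φ.neq ⊕ Fin ψ.neq)
    (Sum.elim (fun _ => Sum.elim (φ.H (.inl 0)) (ψ.H (.inl 0)))
      (Sum.elim (fun l => Sum.elim (φ.H (.inr l)) 0) (fun l => Sum.elim 0 (ψ.H (.inr l)))))

/-- `join φ ψ` is the formula `∃ v, φ (x - v) ∧ ψ v`. -/
noncomputable def join (φ ψ : PPFormula R 1) : PPFormula R 1 :=
  ofTypes (Unit ⊕ Fin φ.nex ⊕ Fin ψ.nex) (Fin φ.neq ⊕ Fin ψ.neq)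
    (Sum.elim (fun _ => Sum.elim (φ.H (.inl 0)) 0)
      (Sum.elim (fun _ => Sum.elim (-φ.H (.inl 0)) (ψ.H (.inl 0)))
        (Sum.elim (fun l => Sum.elim (φ.H (.inr l)) 0) (fun l => Sum.elim 0 (ψ.H (.inr l))))))

section Lattice

variable {M : Type*} [AddCommGroup M] [Module R M] (φ ψ : PPFormula R 1)

theorem sub_conj : (conj φ ψ).sub M = φ.sub M ⊓ ψ.sub M := by
  ext a
  rw [conj, mem_sub_ofTypes, AddSubgroup.mem_inf, mem_sub_iff, mem_sub_iff]
  constructor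
  · rintro ⟨y, hy⟩
    exact ⟨⟨y ∘ Sum.inl, fun j => by simpa [Fintype.sum_sum_type] using hy (.inl j)⟩,
      ⟨y ∘ Sum.inr, fun j => by simpa [Fintype.sum_sum_type] using hy (.inr j)⟩⟩
  · rintro ⟨⟨y₁, hy₁⟩, ⟨y₂, hy₂⟩⟩
    refine ⟨Sum.elim y₁ y₂, Sum.rec (fun j => ?_) (fun j => ?_)⟩
    · simpa [Fintype.sum_sum_type] using hy₁ j
    · simpa [Fintype.sum_sum_type] using hy₂ j

theorem sub_join : (join φ ψ).sub M = φ.sub M ⊔ ψ.sub M := by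
  ext a
  rw [join, mem_sub_ofTypes, AddSubgroup.mem_sup]
  simp only [mem_sub_iff]
  constructor
  · rintro ⟨y, hy⟩
    refine ⟨a - y (.inl ()), ⟨y ∘ Sum.inr ∘ Sum.inl, fun j => ?_⟩,
      y (.inl ()), ⟨y ∘ Sum.inr ∘ Sum.inr, fun j => ?_⟩, sub_add_cancel _ _⟩
    · simpa [Fintype.sum_sum_type, smul_sub, sub_eq_add_neg, add_assoc] using hy (.inl j)
    · simpa [Fintype.sum_sum_type] using hy (.inr j)
  · rintro ⟨u, ⟨y₁, hy₁⟩, v, ⟨y₂, hy₂⟩, rfl⟩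
    refine ⟨Sum.elim (fun _ => v) (Sum.elim y₁ y₂), Sum.rec (fun j => ?_) (fun j => ?_)⟩
    · simpa [Fintype.sum_sum_type, smul_add, add_assoc] using hy₁ j
    · simpa [Fintype.sum_sum_type] using hy₂ j

variable {φ ψ} {ρ : PPFormula R 1}

theorem conj_le_left : conj φ ψ ≤ φ :=
  le_iff_sub_le.2 fun _ _ _ => (sub_conj _ _).trans_le inf_le_left

theorem conj_le_right : conj φ ψ ≤ ψ :=
  le_iff_sub_le.2 fun _ _ _ => (sub_conj _ _).trans_le inf_le_right

theorem le_conj (h₁ : ρ ≤ φ) (h₂ : ρ ≤ ψ) : ρ ≤ conj φ ψ :=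
  le_iff_sub_le.2 fun M _ _ => (le_inf (sub_mono h₁ M) (sub_mono h₂ M)).trans_eq (sub_conj _ _).symm

theorem conj_le_conj_right (h : φ ≤ ψ) : conj φ ρ ≤ conj ψ ρ :=
  le_conj (conj_le_left.trans h) conj_le_right

theorem left_le_join : φ ≤ join φ ψ :=
  le_iff_sub_le.2 fun _ _ _ => le_sup_left.trans_eq (sub_join _ _).symm

theorem right_le_join : ψ ≤ join φ ψ :=
  le_iff_sub_le.2 fun _ _ _ => le_sup_right.trans_eq (sub_join _ _).symm

theorem join_le (h₁ : φ ≤ ρ) (h₂ : ψ ≤ ρ) : join φ ψ ≤ ρ :=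
  le_iff_sub_le.2 fun M _ _ => (sub_join _ _).trans_le (sup_le (sub_mono h₁ M) (sub_mono h₂ M))

theorem join_le_join_right (h : φ ≤ ψ) : join φ ρ ≤ join ψ ρ :=
  join_le (h.trans left_le_join) right_le_join

theorem le_of_conj_le_of_join_le (hφψ : φ ≤ ψ) (hconj : conj ψ ρ ≤ conj φ ρ)
    (hjoin : join ψ ρ ≤ join φ ρ) : ψ ≤ φ :=
  le_iff_sub_le.2 fun M _ _ => (eq_of_le_of_inf_le_of_sup_le (sub_mono hφψ M)
    (by simpa only [sub_conj] using sub_mono hconj M)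
    (by simpa only [sub_join] using sub_mono hjoin M)).ge

end Lattice

def IsFreeRealization (φ : PPFormula R 1) (M : Type u) [AddCommGroup M] [Module R M]
    (a : M) : Prop :=
  a ∈ φ.sub M ∧ ∀ (N : Type u) [AddCommGroup N] [Module R N] (b : N), b ∈ φ.sub N →
    ∃ f : M →ₗ[R] N, f a = b

theorem IsFreeRealization.generates {φ : PPFormula R 1} {M : Type u} [AddCommGroup M]
    [Module R M] {a : M} (h : IsFreeRealization φ M a) : φ.Generates M a :=
  ⟨h.1, fun _ hψ => le_iff_sub_le.2 fun N _ _ b hb => by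
    obtain ⟨f, rfl⟩ := h.2 N b hb
    exact map_mem_sub f hψ⟩

def relations (ρ : PPFormula R 1) : Submodule R (Fin 1 ⊕ Fin ρ.nex → R) :=
  Submodule.span R (Set.range fun j v => ρ.H v j)

abbrev FreeRealization (ρ : PPFormula R 1) : Type u :=
  (Fin 1 ⊕ Fin ρ.nex → R) ⧸ relations ρ

def freePoint (ρ : PPFormula R 1) : FreeRealization ρ :=
  Submodule.Quotient.mk (Pi.single (Sum.inl 0) 1)

theorem isFreeRealization_freePoint (ρ : PPFormula R 1) :
    IsFreeRealization ρ (FreeRealization ρ) (freePoint ρ) := by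
  refine ⟨mem_sub_iff.2 ⟨fun l => Submodule.Quotient.mk (Pi.single (Sum.inr l) 1),
    fun j => ?_⟩, fun N _ _ b hb => ?_⟩
  · have hsum : ∑ v, ρ.H v j • (Pi.single v 1 : Fin 1 ⊕ Fin ρ.nex → R) = fun w => ρ.H w j := by
      ext w
      simp [Finset.sum_apply, Pi.single_apply]
    have h : Submodule.Quotient.mk (p := relations ρ) (∑ v, ρ.H v j • Pi.single v 1) = 0 := by
      rw [Submodule.Quotient.mk_eq_zero, hsum]
      exact Submodule.subset_span ⟨j, rfl⟩
    rw [← (relations ρ).mkQ_apply, map_sum, Fintype.sum_sum_type] at h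
    simpa [freePoint] using h
  · obtain ⟨y, hy⟩ := mem_sub_iff.1 hb
    refine ⟨(relations ρ).liftQ (Fintype.linearCombination R (Sum.elim (fun _ => b) y)) ?_, ?_⟩
    · rw [relations, Submodule.span_le]
      rintro _ ⟨j, rfl⟩
      simpa [Fintype.linearCombination_apply, Fintype.sum_sum_type] using hy j
    · simp [freePoint]

/-- The formula `∃ y, x = ∑ v, w v • y v ∧ ∀ j, ∑ v, g (Pi.single j 1) v • y v = 0`. -/
noncomputable def ofPresentation {n k : ℕ} (w : Fin n → R)
    (g : (Fin k → R) →ₗ[R] Fin n → R) : PPFormula R 1 :=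
  ofTypes (Fin n) (Unit ⊕ Fin k)
    (Sum.elim (fun _ => Sum.elim (fun _ => -1) 0)
      (fun v => Sum.elim (fun _ => w v) fun j => g (Pi.single j 1) v))

theorem mem_sub_ofPresentation {n k : ℕ} {w : Fin n → R} {g : (Fin k → R) →ₗ[R] Fin n → R}
    {M : Type*} [AddCommGroup M] [Module R M] {a : M} :
    a ∈ (ofPresentation w g).sub M ↔ ∃ y : Fin n → M,
      Fintype.linearCombination R y w = a ∧ Fintype.linearCombination R y ∘ₗ g = 0 := by
  rw [ofPresentation, mem_sub_ofTypes]
  refine exists_congr fun y => ?_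
  simp only [Sum.forall, Sum.elim_inl, Sum.elim_inr, neg_one_smul, Pi.zero_apply, zero_smul,
    zero_add, forall_const, neg_add_eq_zero, ← Fintype.linearCombination_apply]
  refine and_congr eq_comm ⟨fun h => LinearMap.pi_ext' fun j => LinearMap.ext_ring ?_,
    fun h j => ?_⟩
  · simpa using h j
  · simpa using congr($h (Pi.single j 1))

theorem exists_isFreeRealization {M : Type u} [AddCommGroup M] [Module R M]
    [Module.FinitePresentation R M] (a : M) : ∃ φ : PPFormula R 1, IsFreeRealization φ M a := by
  obtain ⟨n, k, f, g, hf, hexact⟩ := Module.FinitePresentation.exists_fin' R M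
  obtain ⟨w, rfl⟩ := hf a
  have hcomb : Fintype.linearCombination R (fun v => f (Pi.single v 1)) = f :=
    LinearMap.pi_ext' fun v => LinearMap.ext_ring (by simp)
  refine ⟨ofPresentation w g, mem_sub_ofPresentation.2 ⟨_, by rw [hcomb], ?_⟩,
    fun N _ _ b hb => ?_⟩
  · rw [hcomb]
    exact hexact.linearMap_comp_eq_zero
  · obtain ⟨y, rfl, hy⟩ := mem_sub_ofPresentation.1 hb
    have hle : LinearMap.range g ≤ LinearMap.ker (Fintype.linearCombination R y) := by
      rintro _ ⟨x, rfl⟩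
      exact congr($hy x)
    refine ⟨(LinearMap.range g).liftQ _ hle ∘ₗ (hexact.linearEquivOfSurjective hf).symm, ?_⟩
    simp

theorem exists_generates {M : Type u} [AddCommGroup M] [Module R M]
    [Module.FinitePresentation R M] (a : M) : ∃ φ : PPFormula R 1, φ.Generates M a :=
  (exists_isFreeRealization a).imp fun _ h => h.generates

/-- Amalgamating `A` with the free realization `(N, t)` of `ρ` along `a ↦ t` gives a non-split
embedding of `A`, which must factor through `f`; so `f a` maps to `t`. -/
theorem generates_of_isLeftAlmostSplit {R A B : Type u} [Ring R] [AddCommGroup A] [Module R A]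
    [AddCommGroup B] [Module R B] [Module.FinitePresentation R A] {f : A →ₗ[R] B}
    (hf : Function.Injective f) (hlas : IsLeftAlmostSplit R f) {a : A} {φ ρ : PPFormula R 1}
    (hφ : φ.Generates A a) (hρφ : ρ ≤ φ) (hρ : f a ∈ ρ.sub B) (ha : a ∉ ρ.sub A) :
    ρ.Generates B (f a) := by
  refine ⟨hρ, fun β hβ => ?_⟩
  have hN := isFreeRealization_freePoint ρ
  set t := freePoint ρ
  obtain ⟨φa, hφa⟩ := exists_isFreeRealization (R := R) a
  obtain ⟨j, hj⟩ := hφa.2 _ t (sub_mono (hρφ.trans (hφ.2 φa hφa.1)) _ hN.1)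
  set D := Submodule.span R {(a, -t)}
  set p := D.mkQ ∘ₗ LinearMap.inl R A (FreeRealization ρ)
  set q := D.mkQ ∘ₗ LinearMap.inr R A (FreeRealization ρ)
  have hpq : p a = q t := by
    simp only [p, q, LinearMap.comp_apply, LinearMap.inl_apply, LinearMap.inr_apply,
      Submodule.mkQ_apply, Submodule.Quotient.eq]
    simp [D]
  have hann : ∀ r : R, r • t = 0 → r • a = 0 := by
    intro r hr
    obtain ⟨h, hh⟩ := hN.2 B (f a) hρ
    apply hf
    rw [map_smul, map_zero, ← hh, ← map_smul, hr, map_zero]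
  have hsplit : ¬ ∃ s, s ∘ₗ p = LinearMap.id := by
    rintro ⟨s, hs⟩
    have : (s ∘ₗ q) t = a := by
      rw [LinearMap.comp_apply, ← hpq, ← LinearMap.comp_apply, hs, LinearMap.id_apply]
    exact ha (this ▸ map_mem_sub (s ∘ₗ q) hN.1)
  obtain ⟨g, hg⟩ := hlas _ p (injective_mkQ_comp_inl_span_singleton hann) hsplit
  let ret := D.liftQ (j.coprod LinearMap.id) <| by
    rw [Submodule.span_singleton_le_iff_mem, LinearMap.mem_ker]
    simp [hj]
  have hret : (ret ∘ₗ g) (f a) = t := by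
    rw [LinearMap.comp_apply, ← LinearMap.comp_apply g, hg]
    simp [ret, p, hj]
  exact hN.generates.2 β (hret ▸ map_mem_sub (ret ∘ₗ g) hβ)

theorem le_or_le_of_isLeftAlmostSplit {R A B : Type u} [Ring R] [AddCommGroup A] [Module R A]
    [AddCommGroup B] [Module R B] [Module.FinitePresentation R A] {f : A →ₗ[R] B}
    (hf : Function.Injective f) (hlas : IsLeftAlmostSplit R f) {a : A}
    {φ β ρ : PPFormula R 1} (hφ : φ.Generates A a) (hβ : f a ∈ β.sub B) (hβρ : β ≤ ρ)
    (hρφ : ρ ≤ φ) : φ ≤ ρ ∨ ρ ≤ β := by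
  by_cases ha : a ∈ ρ.sub A
  · exact .inl (hφ.2 ρ ha)
  · exact .inr ((generates_of_isLeftAlmostSplit hf hlas hφ hρφ (sub_mono hβρ B hβ) ha).2 β hβ)

theorem le_card_jumps_conj_add_card_jumps_join {m : ℕ} {c : Fin (m + 1) → PPFormula R 1}
    (hc : ∀ t : Fin m, c t.castSucc < c t.succ) (w : PPFormula R 1) :
    m ≤ #(jumps fun t => conj (c t) w) + #(jumps fun t => join (c t) w) := by
  have hcover : univ ⊆ (jumps fun t => conj (c t) w) ∪ jumps fun t => join (c t) w := by
    intro t _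
    by_contra h
    simp only [mem_union, mem_jumps, not_or, lt_iff_le_not_ge, not_and, not_not] at h
    exact (hc t).not_ge (le_of_conj_le_of_join_le (hc t).le
      (h.1 (conj_le_conj_right (hc t).le)) (h.2 (join_le_join_right (hc t).le)))
  simpa using (card_le_card hcover).trans (card_union_le _ _)

end PPFormula

open PPFormula

theorem isShortOfLength_of_almostSplit_general
    (R : Type u) [Ring R]
    (A B₁ B₂ C : Type u) [AddCommGroup A] [Module R A] [AddCommGroup B₁] [Module R B₁]
    [AddCommGroup B₂] [Module R B₂] [AddCommGroup C] [Module R C]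
    [Module.FinitePresentation R A]
    [Module.FinitePresentation R B₂] [Module.FinitePresentation R C]
    (i : A →ₗ[R] B₁) (π : A →ₗ[R] B₂) (γ : B₁ →ₗ[R] C) (μ : B₂ →ₗ[R] C) (n : ℕ)
    (hi : Function.Injective i)
    (hμ : IsShortOfLength R μ n)
    (hseq : IsAlmostSplitSequence R (LinearMap.prod i π) (γ.coprod μ)) :
    IsShortOfLength R i (n + 1) := by
  obtain ⟨hf, -, hexact, -, -, -, -, hlas⟩ := hseq
  refine ⟨hi, fun a φ ψ hφ hψ m c hc hstrict => ?_⟩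
  replace hstrict : ∀ t : Fin m, c t.castSucc < c t.succ := hstrict
  obtain ⟨θ, hθ⟩ := exists_generates (R := R) (π a)
  obtain ⟨χ, hχ⟩ := exists_generates (R := R) (μ (π a))
  have hθφ : θ ≤ φ := hθ.2 φ (map_mem_sub π hφ.1)
  have hψμ : μ (π a) ∈ ψ.sub C := by
    have h : γ (i a) + μ (π a) = 0 := (hexact ▸ LinearMap.mem_range_self _ a :)
    rw [eq_neg_of_add_eq_zero_right h]
    exact neg_mem (map_mem_sub γ hψ.1)
  have hβ : (i.prod π) a ∈ (join ψ θ).sub (B₁ × B₂) := by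
    rw [sub_join]
    simpa using AddSubgroup.add_mem_sup (map_mem_sub (LinearMap.inl R B₁ B₂) hψ.1)
      (map_mem_sub (LinearMap.inr R B₁ B₂) hθ.1)
  have hc_mono : Monotone c := Fin.monotone_iff_le_succ.2 fun t => (hstrict t).le
  have hconj : #(jumps fun t => conj (c t) θ) ≤ n :=
    card_jumps_le_of_chain_bound (hμ.2 _ θ χ hθ hχ)
      (fun _ _ hst => conj_le_conj_right (hc_mono hst))
      fun t => ⟨le_conj (hχ.2 _ (sub_mono (hc t).1 C hψμ)) (hχ.2 θ (map_mem_sub μ hθ.1)),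
        conj_le_right⟩
  have hjoin : #(jumps fun t => join (c t) θ) ≤ 1 :=
    card_jumps_le_one (fun _ _ hst => join_le_join_right (hc_mono hst))
      (fun t => ⟨join_le_join_right (hc t).1, join_le (hc t).2 hθφ⟩) fun t =>
        le_or_le_of_isLeftAlmostSplit hf hlas hφ hβ (join_le_join_right (hc t).1)
          (join_le (hc t).2 hθφ)
  have := le_card_jumps_conj_add_card_jumps_join hstrict θ
  omega

/-- Let `R` be an artin algebra.  Suppose `i : A → B₁` is an embedding, `μ : B₂ → C` is a
short embedding of length `n`, and
`0 → A →(i,π) B₁ ⊕ B₂ →(γ,μ) C → 0` is an almost split exact sequence.  Then `i` is a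
short embedding of length at most `n + 1`. -/
theorem isShortOfLength_of_almostSplit
    (k : Type u) [CommRing k] [IsArtinianRing k]
    (R : Type u) [Ring R] [Algebra k R] [Module.Finite k R]
    (A B₁ B₂ C : Type u) [AddCommGroup A] [Module R A] [AddCommGroup B₁] [Module R B₁]
    [AddCommGroup B₂] [Module R B₂] [AddCommGroup C] [Module R C]
    [Module.FinitePresentation R A] [Module.FinitePresentation R B₁]
    [Module.FinitePresentation R B₂] [Module.FinitePresentation R C]
    (i : A →ₗ[R] B₁) (π : A →ₗ[R] B₂) (γ : B₁ →ₗ[R] C) (μ : B₂ →ₗ[R] C) (n : ℕ)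
    (hi : Function.Injective i)
    (hμ : IsShortOfLength R μ n)
    (hseq : IsAlmostSplitSequence R (LinearMap.prod i π) (γ.coprod μ)) :
    IsShortOfLength R i (n + 1) :=
  isShortOfLength_of_almostSplit_general R A B₁ B₂ C i π γ μ n hi hμ hseq
end
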